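/- Suppose (Θ̂₁,…,Θ̂_T) is a tuple of positive definite p×p real matrices that minimizes the adaptive GFlsL objective G_a over all tuples of positive definite p×p real matrices, and suppose that for some integers 1 ≤ s < t ≤ T+1 there is a matrix Σ̂ with Θ̂_r = Σ̂ for all s ≤ r ≤ t−1. With the additional convention ξ_{2,T+1} := 0, one has ‖Σ̂ − (1/(t−s))·∑_{r=s}^{t−1} X_r X_rᵀ‖_F ≤ (T/(t−s))·λ₂·(ξ_{2s} + ξ_{2t}) + λ₁·T·√(p(p−1))·max_{s ≤ r ≤ t−1} max_{u≠v} ξ_{uv,1r}. -/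

import Mathlib

/-!
Perturb the minimiser on the block towards the block mean `Ā`: at the times `s, …, t-1` replace
`Σ̂` by `Σ̂ + ε (Ā - Σ̂) = (1 - ε) Σ̂ + ε Ā`, which for `0 < ε < 1` is again positive definite.
The least-squares part changes by exactly `(t-s)(ε² - 2ε) ‖Σ̂ - Ā‖² / (2T)`; the lasso part grows
by at most `λ₁ (t-s) m √(p(p-1)) ε ‖Σ̂ - Ā‖` (Cauchy–Schwarz over the `p(p-1)` off-diagonal
entries, `m` bounding the weights); among the fused differences only the two across the block
boundaries change, each by at most `ε ‖Σ̂ - Ā‖`. Minimality makes the total change nonnegative;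
dividing by `ε` and letting `ε → 0` leaves `(t-s)/T ‖Σ̂ - Ā‖² ≤ (λ₁ (t-s) m √(p(p-1)) +
λ₂ (ξ_{2s} + ξ_{2t})) ‖Σ̂ - Ā‖`.
-/

open Matrix Finset

/-- Frobenius norm of a real `p × p` matrix. -/
noncomputable def frob {p : ℕ} (A : Matrix (Fin p) (Fin p) ℝ) : ℝ :=
  Real.sqrt (∑ u, ∑ v, (A u v) ^ 2)

/-- The adaptive GFlsL objective, with time indices `t = 1, …, T`, entrywise LASSO
weights `ξ1 u v t` (for `u ≠ v`) and fused weights `ξ2 t`. -/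
noncomputable def gflslA (p T : ℕ) (X : ℕ → Fin p → ℝ) (lam1 lam2 : ℝ)
    (ξ1 : Fin p → Fin p → ℕ → ℝ) (ξ2 : ℕ → ℝ)
    (Θ : ℕ → Matrix (Fin p) (Fin p) ℝ) : ℝ :=
  (1 / (2 * (T : ℝ))) *
      ∑ t ∈ Finset.Icc 1 T,
        ((Θ t)ᵀ * Θ t - (Matrix.vecMulVec (X t) (X t))ᵀ * Θ t
          - (Θ t)ᵀ * Matrix.vecMulVec (X t) (X t)).trace
    + lam1 * ∑ t ∈ Finset.Icc 1 T, ∑ u, ∑ v,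
        (if u ≠ v then ξ1 u v t * |Θ t u v| else 0)
    + lam2 * ∑ t ∈ Finset.Icc 2 T, ξ2 t * frob (Θ t - Θ (t - 1))

theorem Matrix.PosDef.add_smul_sub {n : Type*} [Fintype n] {A B : Matrix n n ℝ} (hA : A.PosDef)
    (hB : B.PosSemidef) {ε : ℝ} (hε₀ : 0 ≤ ε) (hε₁ : ε < 1) : (A + ε • (B - A)).PosDef := by
  have h : A + ε • (B - A) = (1 - ε) • A + ε • B := by
    rw [smul_sub, sub_smul, one_smul]; abel
  rw [h]
  exact (hA.smul (by linarith)).add_posSemidef (hB.smul hε₀)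

namespace GFlsL

attribute [local instance] Matrix.frobeniusNormedAddCommGroup Matrix.frobeniusNormedSpace

variable {p : ℕ}

lemma le_of_forall_mem_Ioo_le_add_mul {a b c : ℝ}
    (h : ∀ ε ∈ Set.Ioo (0 : ℝ) 1, b ≤ a + c * ε) : b ≤ a := by
  have hlim : Filter.Tendsto (fun ε => a + c * ε) (nhdsWithin 0 (Set.Ioi 0)) (nhds a) := by
    have hcont : Continuous fun ε : ℝ => a + c * ε := by fun_prop
    simpa using (hcont.tendsto 0).mono_left nhdsWithin_le_nhds
  exact ge_of_tendsto hlim (Filter.eventually_of_mem (Ioo_mem_nhdsGT one_pos) h)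

lemma le_div_of_forall_mem_Ioo_nonneg {F c K : ℝ} (hF : 0 ≤ F) (hc : 0 < c) (hK : 0 ≤ K)
    (h : ∀ ε ∈ Set.Ioo (0 : ℝ) 1, 0 ≤ ε * (c * (ε - 2) * F ^ 2 + K * F)) : F ≤ K / (2 * c) := by
  have hsq : 2 * c * F ^ 2 ≤ K * F := le_of_forall_mem_Ioo_le_add_mul (c := c * F ^ 2)
    fun ε hε => by linear_combination (mul_nonneg_iff_of_pos_left hε.1).1 (h ε hε)
  rcases hF.eq_or_lt with rfl | hF
  · positivity
  · rw [le_div_iff₀ (by positivity)]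
    exact le_of_mul_le_mul_right (by linear_combination hsq) hF

lemma le_biSup_finset {ι : Type*} (B : Finset ι) (g : ι → ℝ) {i : ι} (hi : i ∈ B) :
    g i ≤ ⨆ j ∈ B, g j :=
  le_ciSup₂ (f := fun j (_ : j ∈ B) => g j)
    ((B.finite_toSet.image g).bddAbove.mono
      (Set.iUnion_subset fun _ => Set.range_subset_iff.2 fun hj => Set.mem_image_of_mem g hj)) i hi

lemma le_iSup_offDiag {n : Type*} [Finite n] (w : n → n → ℝ) {u v : n} (huv : u ≠ v) :
    w u v ≤ ⨆ u, ⨆ v, ⨆ _ : u ≠ v, w u v :=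
  (le_ciSup₂ (f := fun v (_ : u ≠ v) => w u v) ((Set.finite_range (w u)).bddAbove.mono
      (Set.iUnion_subset fun v => Set.range_subset_iff.2 fun _ => Set.mem_range_self v)) v huv).trans
    (le_ciSup (f := fun u => ⨆ v, ⨆ _ : u ≠ v, w u v) (Set.finite_range _).bddAbove u)

lemma frob_eq_norm (A : Matrix (Fin p) (Fin p) ℝ) : frob A = ‖A‖ := by
  simp [frob, Matrix.frobenius_norm_def, Real.sqrt_eq_rpow]

lemma frob_sq (A : Matrix (Fin p) (Fin p) ℝ) : frob A ^ 2 = (Aᵀ * A).trace := by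
  rw [frob, Real.sq_sqrt (by positivity), Finset.sum_comm]
  simp [Matrix.trace, Matrix.mul_apply, sq]

lemma trace_transpose_mul_comm (A B : Matrix (Fin p) (Fin p) ℝ) :
    (Aᵀ * B).trace = (Bᵀ * A).trace := by
  rw [← Matrix.trace_transpose, Matrix.transpose_mul, Matrix.transpose_transpose]

def fitTerm (A Θ : Matrix (Fin p) (Fin p) ℝ) : ℝ := (Θᵀ * Θ - Aᵀ * Θ - Θᵀ * A).trace

lemma fitTerm_add (A Θ D : Matrix (Fin p) (Fin p) ℝ) :
    fitTerm A (Θ + D) = fitTerm A Θ + 2 * ((Θ - A)ᵀ * D).trace + (Dᵀ * D).trace := by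
  have h1 := trace_transpose_mul_comm D Θ
  have h2 := trace_transpose_mul_comm D A
  simp only [fitTerm, Matrix.transpose_add, Matrix.transpose_sub, Matrix.add_mul, Matrix.mul_add,
    Matrix.sub_mul, Matrix.trace_add, Matrix.trace_sub] at *
  linarith

lemma sum_fitTerm_toward_mean {ι : Type*} (B : Finset ι) (A : ι → Matrix (Fin p) (Fin p) ℝ)
    {Abar : Matrix (Fin p) (Fin p) ℝ} (hAbar : ∑ r ∈ B, A r = (B.card : ℝ) • Abar)
    (Θ : Matrix (Fin p) (Fin p) ℝ) (ε : ℝ) :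
    ∑ r ∈ B, fitTerm (A r) (Θ + ε • (Abar - Θ))
      = ∑ r ∈ B, fitTerm (A r) Θ + B.card * (ε ^ 2 - 2 * ε) * frob (Θ - Abar) ^ 2 := by
  have hsum : ∑ r ∈ B, (Θ - A r) = (B.card : ℝ) • (Θ - Abar) := by
    rw [Finset.sum_sub_distrib, Finset.sum_const, hAbar, smul_sub, ← Nat.cast_smul_eq_nsmul ℝ]
  simp only [fitTerm_add, Finset.sum_add_distrib, ← Finset.mul_sum, Finset.sum_const,
    nsmul_eq_mul]
  rw [← Matrix.trace_sum, ← Finset.sum_mul, ← Matrix.transpose_sum, hsum, frob_sq]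
  simp only [Matrix.transpose_smul, Matrix.smul_mul, Matrix.mul_smul, Matrix.trace_smul,
    smul_eq_mul, ← neg_sub Θ Abar, Matrix.transpose_neg, Matrix.neg_mul, Matrix.mul_neg,
    Matrix.trace_neg, smul_neg]
  ring

def offDiagL1 (w : Fin p → Fin p → ℝ) (A : Matrix (Fin p) (Fin p) ℝ) : ℝ :=
  ∑ u, ∑ v, if u ≠ v then w u v * |A u v| else 0

lemma offDiagL1_add_le {w : Fin p → Fin p → ℝ} (hw : ∀ u v, u ≠ v → 0 ≤ w u v)
    (A D : Matrix (Fin p) (Fin p) ℝ) : offDiagL1 w (A + D) ≤ offDiagL1 w A + offDiagL1 w D := by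
  simp only [offDiagL1, ← Finset.sum_add_distrib]
  gcongr with u _ v _
  split_ifs with h
  · rw [← mul_add]
    exact mul_le_mul_of_nonneg_left (abs_add_le _ _) (hw u v h)
  · simp

lemma sum_offDiag_abs_le (A : Matrix (Fin p) (Fin p) ℝ) :
    ∑ u, ∑ v, (if u ≠ v then |A u v| else 0) ≤ √((p : ℝ) * ((p : ℝ) - 1)) * frob A := by
  have hcount : ∑ u : Fin p, ∑ v : Fin p, (if u ≠ v then (1 : ℝ) else 0) = p * (p - 1) := by
    simp_rw [Finset.sum_boole, Finset.filter_ne, Finset.card_erase_of_mem (Finset.mem_univ _)]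
    rcases Nat.eq_zero_or_pos p with rfl | hp
    · simp
    · simp [Nat.cast_sub hp]; ring
  have hcs := Real.sum_mul_le_sqrt_mul_sqrt Finset.univ
    (fun x : Fin p × Fin p => if x.1 ≠ x.2 then (1 : ℝ) else 0) (fun x => |A x.1 x.2|)
  simp only [Fintype.sum_prod_type, ite_mul, one_mul, zero_mul, ite_pow, one_pow,
    sq_abs, ne_eq, OfNat.ofNat_ne_zero, not_false_eq_true, zero_pow] at hcs
  rwa [hcount, ← frob] at hcs

lemma offDiagL1_le {w : Fin p → Fin p → ℝ} {m : ℝ} (hm : 0 ≤ m)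
    (hw : ∀ u v, u ≠ v → w u v ≤ m) (A : Matrix (Fin p) (Fin p) ℝ) :
    offDiagL1 w A ≤ m * √((p : ℝ) * ((p : ℝ) - 1)) * frob A := by
  calc offDiagL1 w A ≤ ∑ u, ∑ v, m * (if u ≠ v then |A u v| else 0) := by
        unfold offDiagL1
        gcongr with u _ v _
        split_ifs with h
        · exact mul_le_mul_of_nonneg_right (hw u v h) (abs_nonneg _)
        · simp
    _ ≤ m * √((p : ℝ) * ((p : ℝ) - 1)) * frob A := by
        simp only [← Finset.mul_sum, mul_assoc]
        exact mul_le_mul_of_nonneg_left (sum_offDiag_abs_le A) hm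

def blockShift (B : Finset ℕ) (D : Matrix (Fin p) (Fin p) ℝ) (Θ : ℕ → Matrix (Fin p) (Fin p) ℝ) :
    ℕ → Matrix (Fin p) (Fin p) ℝ :=
  fun r => Θ r + if r ∈ B then D else 0

lemma sum_blockShift {B I : Finset ℕ} (hBI : B ⊆ I) (f : ℕ → Matrix (Fin p) (Fin p) ℝ → ℝ)
    (D : Matrix (Fin p) (Fin p) ℝ) (Θ : ℕ → Matrix (Fin p) (Fin p) ℝ) :
    ∑ r ∈ I, f r (blockShift B D Θ r)
      = ∑ r ∈ I, f r (Θ r) + ∑ r ∈ B, (f r (Θ r + D) - f r (Θ r)) := by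
  have hout : ∑ r ∈ I \ B, f r (blockShift B D Θ r) = ∑ r ∈ I \ B, f r (Θ r) :=
    Finset.sum_congr rfl fun r hr => by simp [blockShift, (Finset.mem_sdiff.1 hr).2]
  have hin : ∑ r ∈ B, f r (blockShift B D Θ r) = ∑ r ∈ B, f r (Θ r + D) :=
    Finset.sum_congr rfl fun r hr => by simp [blockShift, hr]
  rw [← Finset.sum_sdiff hBI, ← Finset.sum_sdiff hBI (f := fun r => f r (Θ r)), hout, hin,
    Finset.sum_sub_distrib]
  ring

lemma frob_blockShift_sub_le {s t : ℕ} (hst : s < t) (D : Matrix (Fin p) (Fin p) ℝ)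
    (Θ : ℕ → Matrix (Fin p) (Fin p) ℝ) (r : ℕ) :
    frob (blockShift (Icc s (t - 1)) D Θ r - blockShift (Icc s (t - 1)) D Θ (r - 1))
      ≤ frob (Θ r - Θ (r - 1)) + ((if r = s then 1 else 0) + (if r = t then 1 else 0)) * frob D := by
  have hjump : ‖(if r ∈ Icc s (t - 1) then D else 0)
      - (if r - 1 ∈ Icc s (t - 1) then D else 0)‖
        ≤ ((if r = s then 1 else 0) + (if r = t then 1 else 0)) * ‖D‖ := by
    simp only [Finset.mem_Icc]
    split_ifs <;> first | omega | simp only [sub_self, sub_zero, zero_sub, norm_neg, norm_zero,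
      zero_add, add_zero, one_mul, zero_mul, le_refl, norm_nonneg]
  have hsplit : blockShift (Icc s (t - 1)) D Θ r - blockShift (Icc s (t - 1)) D Θ (r - 1)
      = (Θ r - Θ (r - 1)) + ((if r ∈ Icc s (t - 1) then D else 0)
        - (if r - 1 ∈ Icc s (t - 1) then D else 0)) := by
    simp only [blockShift]; abel
  rw [hsplit, frob_eq_norm, frob_eq_norm, frob_eq_norm]
  exact (norm_add_le _ _).trans (add_le_add le_rfl hjump)

lemma sum_fused_blockShift_le {T s t : ℕ} (hst : s < t) {w : ℕ → ℝ}
    (hw : ∀ r ∈ Icc 2 T, 0 ≤ w r) (hws : 0 ≤ w s) (hwt : 0 ≤ w t)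
    (D : Matrix (Fin p) (Fin p) ℝ) (Θ : ℕ → Matrix (Fin p) (Fin p) ℝ) :
    ∑ r ∈ Icc 2 T, w r * frob (blockShift (Icc s (t - 1)) D Θ r
        - blockShift (Icc s (t - 1)) D Θ (r - 1))
      ≤ ∑ r ∈ Icc 2 T, w r * frob (Θ r - Θ (r - 1)) + (w s + w t) * frob D := by
  have hend : ∀ q, 0 ≤ w q →
      ∑ r ∈ Icc 2 T, w r * (if r = q then 1 else 0) ≤ w q := fun q hq => by
    simp only [mul_ite, mul_one, mul_zero, Finset.sum_ite_eq']
    split_ifs <;> simp [hq]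
  calc _ ≤ ∑ r ∈ Icc 2 T, (w r * frob (Θ r - Θ (r - 1))
          + (w r * (if r = s then 1 else 0) + w r * (if r = t then 1 else 0)) * frob D) :=
        Finset.sum_le_sum fun r hr => by
          have := mul_le_mul_of_nonneg_left (frob_blockShift_sub_le hst D Θ r) (hw r hr)
          linarith
    _ ≤ _ := by
        rw [Finset.sum_add_distrib, ← Finset.sum_mul, Finset.sum_add_distrib]
        gcongr
        · rw [frob_eq_norm]; positivity
        · exact hend s hws
        · exact hend t hwt

lemma posDef_blockShift {B I : Finset ℕ} {Θ : ℕ → Matrix (Fin p) (Fin p) ℝ}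
    {Θ₀ A : Matrix (Fin p) (Fin p) ℝ} (hPD : ∀ r ∈ I, (Θ r).PosDef) (hΘ₀ : Θ₀.PosDef)
    (hconst : ∀ r ∈ B, Θ r = Θ₀) (hA : A.PosSemidef) {ε : ℝ} (hε : ε ∈ Set.Ioo (0 : ℝ) 1) :
    ∀ r ∈ I, (blockShift B (ε • (A - Θ₀)) Θ r).PosDef := fun r hr => by
  by_cases hrB : r ∈ B
  · simpa [blockShift, hrB, hconst r hrB] using hΘ₀.add_smul_sub hA hε.1.le hε.2
  · simpa [blockShift, hrB] using hPD r hr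

noncomputable def blockMean (X : ℕ → Fin p → ℝ) (s t : ℕ) : Matrix (Fin p) (Fin p) ℝ :=
  (1 / ((t : ℝ) - (s : ℝ))) • ∑ r ∈ Icc s (t - 1), vecMulVec (X r) (X r)

lemma sum_vecMulVec_eq_smul_blockMean (X : ℕ → Fin p → ℝ) {s t : ℕ} (hst : s < t) :
    ∑ r ∈ Icc s (t - 1), vecMulVec (X r) (X r) = ((t : ℝ) - s) • blockMean X s t := by
  have hn : (t : ℝ) - s ≠ 0 := sub_ne_zero.2 (by exact_mod_cast hst.ne')
  rw [blockMean, smul_smul, mul_one_div_cancel hn, one_smul]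

lemma blockMean_posSemidef (X : ℕ → Fin p → ℝ) {s t : ℕ} (hst : s < t) :
    (blockMean X s t).PosSemidef := by
  refine (Matrix.posSemidef_sum _ fun r _ => ?_).smul
    (one_div_nonneg.2 (sub_nonneg.2 (by exact_mod_cast hst.le)))
  simpa using Matrix.posSemidef_vecMulVec_self_star (X r)

lemma gflslA_eq (p T : ℕ) (X : ℕ → Fin p → ℝ) (lam1 lam2 : ℝ) (ξ1 : Fin p → Fin p → ℕ → ℝ)
    (ξ2 : ℕ → ℝ) (Θ : ℕ → Matrix (Fin p) (Fin p) ℝ) :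
    gflslA p T X lam1 lam2 ξ1 ξ2 Θ
      = 1 / (2 * (T : ℝ)) * ∑ r ∈ Icc 1 T, fitTerm (vecMulVec (X r) (X r)) (Θ r)
        + lam1 * ∑ r ∈ Icc 1 T, offDiagL1 (fun u v => ξ1 u v r) (Θ r)
        + lam2 * ∑ r ∈ Icc 2 T, ξ2 r * frob (Θ r - Θ (r - 1)) :=
  rfl

lemma gflslA_blockShift_le {T s t : ℕ} (hs : 1 ≤ s) (hst : s < t) (ht : t ≤ T + 1)
    {X : ℕ → Fin p → ℝ} {lam1 lam2 : ℝ} (hlam1 : 0 ≤ lam1) (hlam2 : 0 ≤ lam2)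
    {ξ1 : Fin p → Fin p → ℕ → ℝ} {m : ℝ} (hm : 0 ≤ m)
    (hξ1 : ∀ r ∈ Icc s (t - 1), ∀ u v, u ≠ v → 0 ≤ ξ1 u v r ∧ ξ1 u v r ≤ m)
    {ξ2 : ℕ → ℝ} (hξ2 : ∀ r ∈ Icc 2 T, 0 ≤ ξ2 r) (hξ2s : 0 ≤ ξ2 s) (hξ2t : 0 ≤ ξ2 t)
    {Θ : ℕ → Matrix (Fin p) (Fin p) ℝ} {Θ₀ : Matrix (Fin p) (Fin p) ℝ}
    (hconst : ∀ r ∈ Icc s (t - 1), Θ r = Θ₀)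
    {ε : ℝ} (hε : 0 ≤ ε) :
    gflslA p T X lam1 lam2 ξ1 ξ2 (blockShift (Icc s (t - 1)) (ε • (blockMean X s t - Θ₀)) Θ)
      ≤ gflslA p T X lam1 lam2 ξ1 ξ2 Θ
        + ε * (((t : ℝ) - s) / (2 * T) * (ε - 2) * frob (Θ₀ - blockMean X s t) ^ 2
          + (lam1 * ((t : ℝ) - s) * m * √((p : ℝ) * ((p : ℝ) - 1)) + lam2 * (ξ2 s + ξ2 t))
            * frob (Θ₀ - blockMean X s t)) := by
  set B := Icc s (t - 1)
  set D := ε • (blockMean X s t - Θ₀)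
  have hBI : B ⊆ Icc 1 T := fun r hr => by
    simp only [B, Finset.mem_Icc] at hr ⊢; omega
  have hcard : (B.card : ℝ) = t - s := by
    simp only [B, Nat.card_Icc]
    rw [show t - 1 + 1 - s = t - s by omega, Nat.cast_sub hst.le]
  have hfrobD : frob D = ε * frob (Θ₀ - blockMean X s t) := by
    rw [frob_eq_norm, frob_eq_norm, norm_smul, Real.norm_of_nonneg hε, norm_sub_rev]
  have hfit := sum_blockShift hBI (fun r M => fitTerm (vecMulVec (X r) (X r)) M) D Θ
  have hfitB : ∑ r ∈ B, (fitTerm (vecMulVec (X r) (X r)) (Θ r + D)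
      - fitTerm (vecMulVec (X r) (X r)) (Θ r))
        = (t - s) * (ε ^ 2 - 2 * ε) * frob (Θ₀ - blockMean X s t) ^ 2 := by
    rw [Finset.sum_congr rfl fun r hr => by rw [hconst r hr], Finset.sum_sub_distrib,
      sum_fitTerm_toward_mean B _ (hcard ▸ sum_vecMulVec_eq_smul_blockMean X hst), hcard]
    ring
  have hlasso := sum_blockShift hBI (fun r M => offDiagL1 (fun u v => ξ1 u v r) M) D Θ
  have hlassoB : ∑ r ∈ B, (offDiagL1 (fun u v => ξ1 u v r) (Θ r + D)
      - offDiagL1 (fun u v => ξ1 u v r) (Θ r))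
        ≤ (t - s) * (m * √((p : ℝ) * ((p : ℝ) - 1)) * frob D) := by
    rw [← hcard, ← nsmul_eq_mul, ← Finset.sum_const]
    refine Finset.sum_le_sum fun r hr => ?_
    have h1 := offDiagL1_add_le (fun u v huv => (hξ1 r hr u v huv).1) (Θ r) D
    have h2 := offDiagL1_le hm (fun u v huv => (hξ1 r hr u v huv).2) D
    linarith
  have hfused := sum_fused_blockShift_le hst hξ2 hξ2s hξ2t D Θ
  rw [hfrobD] at hlassoB hfused
  rw [gflslA_eq, gflslA_eq, hfit, hfitB, hlasso]
  linear_combination lam1 * hlassoB + lam2 * hfused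

lemma biSup_offDiag_nonneg (B : Finset ℕ) {w : Fin p → Fin p → ℕ → ℝ}
    (hw : ∀ r ∈ B, ∀ u v, u ≠ v → 0 ≤ w u v r) :
    0 ≤ ⨆ r ∈ B, ⨆ u, ⨆ v, ⨆ _ : u ≠ v, w u v r :=
  Real.iSup_nonneg fun r => Real.iSup_nonneg fun hr => Real.iSup_nonneg fun u =>
    Real.iSup_nonneg fun v => Real.iSup_nonneg fun huv => hw r hr u v huv

lemma le_biSup_offDiag {B : Finset ℕ} (w : Fin p → Fin p → ℕ → ℝ) {r : ℕ} (hr : r ∈ B)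
    {u v : Fin p} (huv : u ≠ v) : w u v r ≤ ⨆ r ∈ B, ⨆ u, ⨆ v, ⨆ _ : u ≠ v, w u v r :=
  (le_iSup_offDiag (fun u v => w u v r) huv).trans
    (le_biSup_finset B (fun r => ⨆ u, ⨆ v, ⨆ _ : u ≠ v, w u v r) hr)

lemma fusedWeight_nonneg {T : ℕ} {w : ℕ → ℝ} (hw : ∀ r ∈ Icc 2 T, 0 ≤ w r)
    (hw1 : w 1 = 0) (hwT : w (T + 1) = 0) {r : ℕ} (h1 : 1 ≤ r) (hr : r ≤ T + 1) : 0 ≤ w r := by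
  rcases Nat.lt_or_ge r 2 with h | h
  · rw [show r = 1 by omega, hw1]
  rcases Nat.lt_or_ge T r with h' | h'
  · rw [show r = T + 1 by omega, hwT]
  · exact hw r (Finset.mem_Icc.2 ⟨h, h'⟩)

lemma frob_sub_blockMean_le {T s t : ℕ} (hs : 1 ≤ s) (hst : s < t) (ht : t ≤ T + 1)
    {X : ℕ → Fin p → ℝ} {lam1 lam2 : ℝ} (hlam1 : 0 ≤ lam1) (hlam2 : 0 ≤ lam2)
    {ξ1 : Fin p → Fin p → ℕ → ℝ} {m : ℝ} (hm : 0 ≤ m)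
    (hξ1 : ∀ r ∈ Icc s (t - 1), ∀ u v, u ≠ v → 0 ≤ ξ1 u v r ∧ ξ1 u v r ≤ m)
    {ξ2 : ℕ → ℝ} (hξ2 : ∀ r ∈ Icc 2 T, 0 ≤ ξ2 r) (hξ2s : 0 ≤ ξ2 s) (hξ2t : 0 ≤ ξ2 t)
    {Θhat : ℕ → Matrix (Fin p) (Fin p) ℝ} (hPD : ∀ r ∈ Icc 1 T, (Θhat r).PosDef)
    (hmin : ∀ Θ : ℕ → Matrix (Fin p) (Fin p) ℝ, (∀ r ∈ Icc 1 T, (Θ r).PosDef) →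
      gflslA p T X lam1 lam2 ξ1 ξ2 Θhat ≤ gflslA p T X lam1 lam2 ξ1 ξ2 Θ)
    {Θ₀ : Matrix (Fin p) (Fin p) ℝ} (hconst : ∀ r ∈ Icc s (t - 1), Θhat r = Θ₀) :
    frob (Θ₀ - blockMean X s t)
      ≤ T / ((t : ℝ) - s) * lam2 * (ξ2 s + ξ2 t) + lam1 * T * √((p : ℝ) * ((p : ℝ) - 1)) * m := by
  have hn : (0 : ℝ) < t - s := sub_pos.2 (by exact_mod_cast hst)
  have hT : (0 : ℝ) < T := by exact_mod_cast (show 0 < T by omega)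
  have hsB : s ∈ Icc s (t - 1) := Finset.mem_Icc.2 ⟨le_rfl, by omega⟩
  have hΘ₀ : Θ₀.PosDef := hconst s hsB ▸ hPD s (Finset.mem_Icc.2 ⟨hs, by omega⟩)
  have hK : 0 ≤ lam1 * ((t : ℝ) - s) * m * √((p : ℝ) * ((p : ℝ) - 1)) + lam2 * (ξ2 s + ξ2 t) :=
    add_nonneg (mul_nonneg (mul_nonneg (mul_nonneg hlam1 hn.le) hm) (Real.sqrt_nonneg _))
      (mul_nonneg hlam2 (add_nonneg hξ2s hξ2t))
  have key := le_div_of_forall_mem_Ioo_nonneg (F := frob (Θ₀ - blockMean X s t))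
    (c := ((t : ℝ) - s) / (2 * T)) (Real.sqrt_nonneg _) (by positivity) hK
    fun ε hε => by
      have := (hmin _ (posDef_blockShift hPD hΘ₀ hconst (blockMean_posSemidef X hst) hε)).trans
        (gflslA_blockShift_le hs hst ht hlam1 hlam2 hm hξ1 hξ2 hξ2s hξ2t hconst hε.1.le)
      linarith
  calc frob (Θ₀ - blockMean X s t) ≤ _ := key
    _ = _ := by field_simp; ring

end GFlsL

open GFlsL

theorem stmt8_general (p T : ℕ)
    (X : ℕ → Fin p → ℝ) (lam1 lam2 : ℝ) (hlam1 : 0 ≤ lam1) (hlam2 : 0 < lam2)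
    (ξ1 : Fin p → Fin p → ℕ → ℝ)
    (hξ1 : ∀ u v : Fin p, u ≠ v → ∀ t ∈ Finset.Icc 1 T, 0 ≤ ξ1 u v t)
    (ξ2 : ℕ → ℝ) (hξ2 : ∀ t ∈ Finset.Icc 2 T, 0 ≤ ξ2 t) (hξ21 : ξ2 1 = 0)
    (hξ2T1 : ξ2 (T + 1) = 0)
    (Θhat : ℕ → Matrix (Fin p) (Fin p) ℝ)
    (hPD : ∀ t ∈ Finset.Icc 1 T, (Θhat t).PosDef)
    (hmin : ∀ Θ : ℕ → Matrix (Fin p) (Fin p) ℝ,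
      (∀ t ∈ Finset.Icc 1 T, (Θ t).PosDef) →
      gflslA p T X lam1 lam2 ξ1 ξ2 Θhat ≤ gflslA p T X lam1 lam2 ξ1 ξ2 Θ)
    (s t : ℕ) (hs : 1 ≤ s) (hst : s < t) (ht : t ≤ T + 1)
    (Sighat : Matrix (Fin p) (Fin p) ℝ)
    (hconst : ∀ r ∈ Finset.Icc s (t - 1), Θhat r = Sighat) :
    frob (Sighat - (1 / ((t : ℝ) - (s : ℝ))) •
        ∑ r ∈ Finset.Icc s (t - 1), Matrix.vecMulVec (X r) (X r))
      ≤ ((T : ℝ) / ((t : ℝ) - (s : ℝ))) * lam2 * (ξ2 s + ξ2 t)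
        + lam1 * (T : ℝ) * Real.sqrt ((p : ℝ) * ((p : ℝ) - 1)) *
          (⨆ r ∈ Finset.Icc s (t - 1), ⨆ u : Fin p, ⨆ v : Fin p,
            ⨆ _ : u ≠ v, ξ1 u v r) := by
  have hBI : ∀ r ∈ Icc s (t - 1), r ∈ Icc 1 T := fun r hr => by
    simp only [mem_Icc] at hr ⊢; omega
  have hξ1M : ∀ r ∈ Icc s (t - 1), ∀ u v, u ≠ v →
      0 ≤ ξ1 u v r ∧ ξ1 u v r ≤ ⨆ r ∈ Icc s (t - 1), ⨆ u, ⨆ v, ⨆ _ : u ≠ v, ξ1 u v r :=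
    fun r hr u v huv => ⟨hξ1 u v huv r (hBI r hr), le_biSup_offDiag ξ1 hr huv⟩
  have hM0 := biSup_offDiag_nonneg _ fun r hr u v huv => (hξ1M r hr u v huv).1
  exact frob_sub_blockMean_le hs hst ht hlam1 hlam2.le hM0 hξ1M hξ2
    (fusedWeight_nonneg hξ2 hξ21 hξ2T1 hs (by omega))
    (fusedWeight_nonneg hξ2 hξ21 hξ2T1 (by omega) ht) hPD hmin hconst

/-- if a minimizer of the adaptive GFlsL objective over positive definite
tuples is constant on a block `{s, …, t-1}`, the common block value deviates from the
block sample second moment by at most the stated bound in Frobenius norm. -/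
theorem stmt8 (p T : ℕ) (hp : 1 ≤ p) (hT : 1 ≤ T)
    (X : ℕ → Fin p → ℝ) (lam1 lam2 : ℝ) (hlam1 : 0 ≤ lam1) (hlam2 : 0 < lam2)
    (ξ1 : Fin p → Fin p → ℕ → ℝ)
    (hξ1 : ∀ u v : Fin p, u ≠ v → ∀ t ∈ Finset.Icc 1 T, 0 ≤ ξ1 u v t)
    (ξ2 : ℕ → ℝ) (hξ2 : ∀ t ∈ Finset.Icc 2 T, 0 ≤ ξ2 t) (hξ21 : ξ2 1 = 0)
    (hξ2T1 : ξ2 (T + 1) = 0)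
    (Θhat : ℕ → Matrix (Fin p) (Fin p) ℝ)
    (hPD : ∀ t ∈ Finset.Icc 1 T, (Θhat t).PosDef)
    (hmin : ∀ Θ : ℕ → Matrix (Fin p) (Fin p) ℝ,
      (∀ t ∈ Finset.Icc 1 T, (Θ t).PosDef) →
      gflslA p T X lam1 lam2 ξ1 ξ2 Θhat ≤ gflslA p T X lam1 lam2 ξ1 ξ2 Θ)
    (s t : ℕ) (hs : 1 ≤ s) (hst : s < t) (ht : t ≤ T + 1)
    (Sighat : Matrix (Fin p) (Fin p) ℝ)
    (hconst : ∀ r ∈ Finset.Icc s (t - 1), Θhat r = Sighat) :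
    frob (Sighat - (1 / ((t : ℝ) - (s : ℝ))) •
        ∑ r ∈ Finset.Icc s (t - 1), Matrix.vecMulVec (X r) (X r))
      ≤ ((T : ℝ) / ((t : ℝ) - (s : ℝ))) * lam2 * (ξ2 s + ξ2 t)
        + lam1 * (T : ℝ) * Real.sqrt ((p : ℝ) * ((p : ℝ) - 1)) *
          (⨆ r ∈ Finset.Icc s (t - 1), ⨆ u : Fin p, ⨆ v : Fin p,
            ⨆ _ : u ≠ v, ξ1 u v r) :=
  stmt8_general p T X lam1 lam2 hlam1 hlam2 ξ1 hξ1 ξ2 hξ2 hξ21 hξ2T1 Θhat hPD hmin s t hs hst ht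
    Sighat hconst
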